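/- Let H be a group and H0 a normal subgroup of H of finite index, with quotient group G = H/H0 (a finite group). Let Γ be a group and suppose there exists an injective group homomorphism H0 → Γ. Then there exists an injective group homomorphism from H into the wreath product Γ ≀ G, i.e., into the semidirect product (G → Γ) ⋊ G where G acts on the direct product G → Γ by left translation. -/

import Mathlib

/-!
Choose a set-theoretic section `s` of `π : H → G`. For `h ∈ H` and `g ∈ G` the element
`(s g)⁻¹ * h * s ((π h)⁻¹ * g)` lies in `ker π`, and it satisfies the cocycle identity
`c (h₁ * h₂) g = c h₁ g * c h₂ ((π h₁)⁻¹ * g)`, which is precisely the multiplication rule of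
`(G → ker π) ⋊ G`. Hence `h ↦ (ψ ∘ c h, π h)` is a homomorphism into `Γ ≀ G`. If it sends `h`
to `1`, then `π h = 1` and `ψ (c h 1) = 1`, so `(s 1)⁻¹ * h * s 1 = 1` and `h = 1`.
-/

/-- The left-translation action of `G` on the direct product `G → Γ` of copies
of `Γ` indexed by `G`: `(g • f) x = f (g⁻¹ * x)`. -/
def leftTranslationAction (G Γ : Type*) [Group G] [Group Γ] :
    G →* MulAut (G → Γ) where
  toFun g :=
    { toFun := fun f x => f (g⁻¹ * x)
      invFun := fun f x => f (g * x)
      left_inv := fun f => funext fun x => by simp [mul_assoc]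
      right_inv := fun f => funext fun x => by simp [mul_assoc]
      map_mul' := fun f₁ f₂ => rfl }
  map_one' := by
    ext f x
    simp
  map_mul' := fun g₁ g₂ => by
    ext f x
    simp [mul_assoc]

namespace WreathEmbedding

variable {H G Γ : Type*} [Group H] [Group G] [Group Γ] {π : H →* G} {s : G → H}

def cocycle (hs : Function.RightInverse s π) (h : H) (g : G) : π.ker :=
  ⟨(s g)⁻¹ * h * s ((π h)⁻¹ * g), by
    rw [MonoidHom.mem_ker, map_mul, map_mul, map_inv, hs, hs]
    group⟩

theorem cocycle_mul (hs : Function.RightInverse s π) (h₁ h₂ : H) (g : G) :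
    cocycle hs (h₁ * h₂) g = cocycle hs h₁ g * cocycle hs h₂ ((π h₁)⁻¹ * g) := by
  ext
  simp only [cocycle, Subgroup.coe_mul, map_mul, mul_inv_rev]
  group

theorem cocycle_eq_one_iff (hs : Function.RightInverse s π) {h : H} (h1 : π h = 1) :
    cocycle hs h 1 = 1 ↔ h = 1 := by
  simp only [cocycle, h1, inv_one, one_mul, Subgroup.mk_eq_one]
  rw [mul_assoc, inv_mul_eq_one, eq_comm, mul_eq_right]

def toWreath (hs : Function.RightInverse s π) (ψ : π.ker →* Γ) :
    H →* (G → Γ) ⋊[leftTranslationAction G Γ] G :=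
  MonoidHom.mk' (fun h => ⟨fun g => ψ (cocycle hs h g), π h⟩) fun h₁ h₂ => by
    ext g
    · simp only [SemidirectProduct.mul_left, cocycle_mul, map_mul]
      rfl
    · simp

theorem toWreath_injective (hs : Function.RightInverse s π) {ψ : π.ker →* Γ}
    (hψ : Function.Injective ψ) : Function.Injective (toWreath hs ψ) := by
  rw [injective_iff_map_eq_one]
  intro h hh
  have hπ : π h = 1 := congrArg SemidirectProduct.right hh
  have hψc : ψ (cocycle hs h 1) = 1 := congrFun (congrArg SemidirectProduct.left hh) 1
  exact (cocycle_eq_one_iff hs hπ).mp ((map_eq_one_iff ψ hψ).mp hψc)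

end WreathEmbedding

theorem kaloujnine_krasner_embedding_general {H Γ : Type*} [Group H] [Group Γ]
    (H0 : Subgroup H) [H0.Normal]
    (ψ : H0 →* Γ) (hψ : Function.Injective ψ) :
    ∃ e : H →* ((H ⧸ H0 → Γ) ⋊[leftTranslationAction (H ⧸ H0) Γ] (H ⧸ H0)),
      Function.Injective e := by
  have hker : (QuotientGroup.mk' H0).ker ≤ H0 := (QuotientGroup.ker_mk' H0).le
  exact ⟨WreathEmbedding.toWreath (π := QuotientGroup.mk' H0) QuotientGroup.out_eq'
      (ψ.comp (Subgroup.inclusion hker)),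
    WreathEmbedding.toWreath_injective _ (hψ.comp (Subgroup.inclusion_injective hker))⟩

/-- **Kaloujnine–Krasner embedding theorem.** If `H0` is a finite-index normal
subgroup of `H` with quotient `G = H ⧸ H0`, and `H0` embeds into a group `Γ`,
then `H` embeds into the (regular) wreath product `Γ ≀ G`, realized as the
semidirect product `(G → Γ) ⋊ G` for the left-translation action. -/
theorem kaloujnine_krasner_embedding {H Γ : Type*} [Group H] [Group Γ]
    (H0 : Subgroup H) [H0.Normal] [H0.FiniteIndex]
    (ψ : H0 →* Γ) (hψ : Function.Injective ψ) :
    ∃ e : H →* ((H ⧸ H0 → Γ) ⋊[leftTranslationAction (H ⧸ H0) Γ] (H ⧸ H0)),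
      Function.Injective e :=
  kaloujnine_krasner_embedding_general H0 ψ hψ
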